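/- arXiv:math/0604516 — 9 statements merged into one kernel-verified Lean document; each statement's English description precedes it below -/
import Mathlib

section
/- Let G be a group and let α₁, α₂, β, δ₁, δ₂, σ₁ be elements of G. Assume: (i) δ₁ and δ₂ are central in G; (ii) α₁α₂ = α₂α₁; (iii) the braid relations α₁βα₁ = βα₁β and α₂βα₂ = βα₂β hold; (iv) σ₁ = β⁻¹α₂⁻¹α₂⁻¹α₁βα₁⁻¹α₂α₂β; and (v) the lantern-type relation α₂²δ₁δ₂ = (α₂β)⁶ σ₁ α₁ holds. Then δ₁δ₂ = (α₁α₂β)⁴. -/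
/-- Two-holed torus relation (group-theoretic content):
`δ₁δ₂ = (α₁α₂β)⁴` in the mapping class group `Γ_{1,2}`. -/
theorem two_holed_torus_relation (G : Type*) [Group G]
    (α₁ α₂ β δ₁ δ₂ σ₁ : G)
    (hδ₁ : ∀ g : G, δ₁ * g = g * δ₁)
    (hδ₂ : ∀ g : G, δ₂ * g = g * δ₂)
    (hcomm : α₁ * α₂ = α₂ * α₁)
    (hbraid₁ : α₁ * β * α₁ = β * α₁ * β)
    (hbraid₂ : α₂ * β * α₂ = β * α₂ * β)
    (hσ₁ : σ₁ = β⁻¹ * α₂⁻¹ * α₂⁻¹ * α₁ * β * α₁⁻¹ * α₂ * α₂ * β)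
    (hlantern : α₂ ^ 2 * δ₁ * δ₂ = (α₂ * β) ^ 6 * σ₁ * α₁) :
    δ₁ * δ₂ = (α₁ * α₂ * β) ^ 4 := by
  have Hac : ∀ t : G, α₁ * (α₂ * t) = α₂ * (α₁ * t) := fun t => by
    simp only [← mul_assoc]; rw [hcomm]
  have Ha : ∀ t : G, α₁ * (β * (α₁ * t)) = β * (α₁ * (β * t)) := fun t => by
    simp only [← mul_assoc]; rw [hbraid₁]
  have Hc : ∀ t : G, α₂ * (β * (α₂ * t)) = β * (α₂ * (β * t)) := fun t => by
    simp only [← mul_assoc]; rw [hbraid₂]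
  have Pac : α₁ * α₂ = α₂ * α₁ := hcomm
  have Pa : α₁ * (β * α₁) = β * (α₁ * β) := by simp only [← mul_assoc]; rw [hbraid₁]
  have Pc : α₂ * (β * α₂) = β * (α₂ * β) := by simp only [← mul_assoc]; rw [hbraid₂]
  have h1 : ∀ t : G, α₁ * (β * (α₁⁻¹ * t)) = β⁻¹ * (α₁ * (β * t)) := fun t => by
    rw [eq_inv_mul_iff_mul_eq, ← Ha, mul_inv_cancel_left]
  have h2 : ∀ t : G, α₂ * (β * (α₂ * (β * (α₂⁻¹ * (β⁻¹ * t))))) = α₂ * (α₂ * t) := fun t => by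
    rw [← Hc, mul_inv_cancel_left, mul_inv_cancel_left]
  have key : α₂ * (β * (α₂ * (β * (α₂ * (β * (α₂ * (α₂ * (α₁ * (β * (α₂ * (α₂ * (β * α₁)))))))))))) = α₂ * (α₂ * (α₁ * (α₂ * (β * (α₁ * (α₂ * (β * (α₁ * (α₂ * (β * (α₁ * (α₂ * β)))))))))))) :=
    calc α₂ * (β * (α₂ * (β * (α₂ * (β * (α₂ * (α₂ * (α₁ * (β * (α₂ * (α₂ * (β * α₁))))))))))))
      _ = α₂ * (β * (α₂ * (β * (α₂ * (β * (α₂ * (α₁ * (α₂ * (β * (α₂ * (α₂ * (β * α₁)))))))))))) := congrArg (α₂ * ·) (congrArg (β * ·) (congrArg (α₂ * ·) (congrArg (β * ·) (congrArg (α₂ * ·) (congrArg (β * ·) (congrArg (α₂ * ·) ((Hac (β * (α₂ * (α₂ * (β * α₁))))).symm)))))))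
      _ = α₂ * (α₂ * (β * (α₂ * (α₂ * (β * (α₂ * (α₁ * (α₂ * (β * (α₂ * (α₂ * (β * α₁)))))))))))) := congrArg (α₂ * ·) ((Hc (α₂ * (β * (α₂ * (α₁ * (α₂ * (β * (α₂ * (α₂ * (β * α₁)))))))))).symm)
      _ = α₂ * (α₂ * (β * (α₂ * (β * (α₂ * (β * (α₁ * (α₂ * (β * (α₂ * (α₂ * (β * α₁)))))))))))) := congrArg (α₂ * ·) (congrArg (α₂ * ·) (congrArg (β * ·) (congrArg (α₂ * ·) (Hc (α₁ * (α₂ * (β * (α₂ * (α₂ * (β * α₁))))))))))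
      _ = α₂ * (α₂ * (α₂ * (β * (α₂ * (α₂ * (β * (α₁ * (α₂ * (β * (α₂ * (α₂ * (β * α₁)))))))))))) := congrArg (α₂ * ·) (congrArg (α₂ * ·) ((Hc (α₂ * (β * (α₁ * (α₂ * (β * (α₂ * (α₂ * (β * α₁))))))))).symm))
      _ = α₂ * (α₂ * (α₂ * (β * (α₂ * (α₂ * (β * (α₁ * (β * (α₂ * (β * (α₂ * (β * α₁)))))))))))) := congrArg (α₂ * ·) (congrArg (α₂ * ·) (congrArg (α₂ * ·) (congrArg (β * ·) (congrArg (α₂ * ·) (congrArg (α₂ * ·) (congrArg (β * ·) (congrArg (α₁ * ·) (Hc (α₂ * (β * α₁))))))))))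
      _ = α₂ * (α₂ * (α₂ * (β * (α₂ * (α₂ * (α₁ * (β * (α₁ * (α₂ * (β * (α₂ * (β * α₁)))))))))))) := congrArg (α₂ * ·) (congrArg (α₂ * ·) (congrArg (α₂ * ·) (congrArg (β * ·) (congrArg (α₂ * ·) (congrArg (α₂ * ·) ((Ha (α₂ * (β * (α₂ * (β * α₁))))).symm))))))
      _ = α₂ * (α₂ * (α₂ * (β * (α₂ * (α₁ * (α₂ * (β * (α₁ * (α₂ * (β * (α₂ * (β * α₁)))))))))))) := congrArg (α₂ * ·) (congrArg (α₂ * ·) (congrArg (α₂ * ·) (congrArg (β * ·) (congrArg (α₂ * ·) ((Hac (β * (α₁ * (α₂ * (β * (α₂ * (β * α₁))))))).symm)))))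
      _ = α₂ * (α₂ * (α₂ * (β * (α₁ * (α₂ * (α₂ * (β * (α₁ * (α₂ * (β * (α₂ * (β * α₁)))))))))))) := congrArg (α₂ * ·) (congrArg (α₂ * ·) (congrArg (α₂ * ·) (congrArg (β * ·) ((Hac (α₂ * (β * (α₁ * (α₂ * (β * (α₂ * (β * α₁)))))))).symm))))
      _ = α₂ * (α₂ * (α₂ * (β * (α₁ * (α₂ * (α₂ * (β * (α₂ * (α₁ * (β * (α₂ * (β * α₁)))))))))))) := congrArg (α₂ * ·) (congrArg (α₂ * ·) (congrArg (α₂ * ·) (congrArg (β * ·) (congrArg (α₁ * ·) (congrArg (α₂ * ·) (congrArg (α₂ * ·) (congrArg (β * ·) (Hac (β * (α₂ * (β * α₁)))))))))))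
      _ = α₂ * (α₂ * (α₂ * (β * (α₁ * (α₂ * (β * (α₂ * (β * (α₁ * (β * (α₂ * (β * α₁)))))))))))) := congrArg (α₂ * ·) (congrArg (α₂ * ·) (congrArg (α₂ * ·) (congrArg (β * ·) (congrArg (α₁ * ·) (congrArg (α₂ * ·) (Hc (α₁ * (β * (α₂ * (β * α₁))))))))))
      _ = α₂ * (α₂ * (α₂ * (β * (α₁ * (β * (α₂ * (β * (β * (α₁ * (β * (α₂ * (β * α₁)))))))))))) := congrArg (α₂ * ·) (congrArg (α₂ * ·) (congrArg (α₂ * ·) (congrArg (β * ·) (congrArg (α₁ * ·) (Hc (β * (α₁ * (β * (α₂ * (β * α₁))))))))))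
      _ = α₂ * (α₂ * (α₂ * (α₁ * (β * (α₁ * (α₂ * (β * (β * (α₁ * (β * (α₂ * (β * α₁)))))))))))) := congrArg (α₂ * ·) (congrArg (α₂ * ·) (congrArg (α₂ * ·) ((Ha (α₂ * (β * (β * (α₁ * (β * (α₂ * (β * α₁)))))))).symm)))
      _ = α₂ * (α₂ * (α₁ * (α₂ * (β * (α₁ * (α₂ * (β * (β * (α₁ * (β * (α₂ * (β * α₁)))))))))))) := congrArg (α₂ * ·) (congrArg (α₂ * ·) ((Hac (β * (α₁ * (α₂ * (β * (β * (α₁ * (β * (α₂ * (β * α₁)))))))))).symm))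
      _ = α₂ * (α₂ * (α₁ * (α₂ * (β * (α₁ * (α₂ * (β * (α₁ * (β * (α₁ * (α₂ * (β * α₁)))))))))))) := congrArg (α₂ * ·) (congrArg (α₂ * ·) (congrArg (α₁ * ·) (congrArg (α₂ * ·) (congrArg (β * ·) (congrArg (α₁ * ·) (congrArg (α₂ * ·) (congrArg (β * ·) ((Ha (α₂ * (β * α₁))).symm))))))))
      _ = α₂ * (α₂ * (α₁ * (α₂ * (β * (α₁ * (α₂ * (β * (α₁ * (β * (α₂ * (α₁ * (β * α₁)))))))))))) := congrArg (α₂ * ·) (congrArg (α₂ * ·) (congrArg (α₁ * ·) (congrArg (α₂ * ·) (congrArg (β * ·) (congrArg (α₁ * ·) (congrArg (α₂ * ·) (congrArg (β * ·) (congrArg (α₁ * ·) (congrArg (β * ·) (Hac (β * α₁)))))))))))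
      _ = α₂ * (α₂ * (α₁ * (α₂ * (β * (α₁ * (α₂ * (β * (α₁ * (β * (α₂ * (β * (α₁ * β)))))))))))) := congrArg (α₂ * ·) (congrArg (α₂ * ·) (congrArg (α₁ * ·) (congrArg (α₂ * ·) (congrArg (β * ·) (congrArg (α₁ * ·) (congrArg (α₂ * ·) (congrArg (β * ·) (congrArg (α₁ * ·) (congrArg (β * ·) (congrArg (α₂ * ·) (Pa)))))))))))
      _ = α₂ * (α₂ * (α₁ * (α₂ * (β * (α₁ * (α₂ * (β * (α₁ * (α₂ * (β * (α₂ * (α₁ * β)))))))))))) := congrArg (α₂ * ·) (congrArg (α₂ * ·) (congrArg (α₁ * ·) (congrArg (α₂ * ·) (congrArg (β * ·) (congrArg (α₁ * ·) (congrArg (α₂ * ·) (congrArg (β * ·) (congrArg (α₁ * ·) ((Hc (α₁ * β)).symm)))))))))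
      _ = α₂ * (α₂ * (α₁ * (α₂ * (β * (α₁ * (α₂ * (β * (α₁ * (α₂ * (β * (α₁ * (α₂ * β)))))))))))) := congrArg (α₂ * ·) (congrArg (α₂ * ·) (congrArg (α₁ * ·) (congrArg (α₂ * ·) (congrArg (β * ·) (congrArg (α₁ * ·) (congrArg (α₂ * ·) (congrArg (β * ·) (congrArg (α₁ * ·) (congrArg (α₂ * ·) (congrArg (β * ·) ((Hac β).symm)))))))))))
  have hl : α₂ ^ 2 * (δ₁ * δ₂) = α₂ ^ 2 * (α₁ * α₂ * β) ^ 4 := by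
    calc α₂ ^ 2 * (δ₁ * δ₂) = (α₂ * β) ^ 6 * σ₁ * α₁ := by rw [← mul_assoc]; exact hlantern
      _ = α₂ * (β * (α₂ * (β * (α₂ * (β * (α₂ * (α₂ * (α₁ * (β * (α₂ * (α₂ * (β * α₁)))))))))))) := by
          rw [hσ₁]
          simp only [pow_succ, pow_zero, one_mul, mul_assoc, mul_inv_cancel_left]
          rw [h1, h2]
      _ = α₂ * (α₂ * (α₁ * (α₂ * (β * (α₁ * (α₂ * (β * (α₁ * (α₂ * (β * (α₁ * (α₂ * β)))))))))))) := key
      _ = α₂ ^ 2 * (α₁ * α₂ * β) ^ 4 := by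
          simp only [pow_succ, pow_zero, one_mul, mul_assoc]
  exact mul_left_cancel hl
end

section
/- Let G be a group and let α₁, α₂, α₃, β, δ₁, δ₂, δ₃, γ₂, σ₂ be elements of G. Assume: (i) δ₁, δ₂, δ₃ are central in G; (ii) α₁, α₂, α₃ pairwise commute; (iii) the braid relations αᵢβαᵢ = βαᵢβ hold for i = 1, 2, 3; (iv) σ₂ = β⁻¹α₁⁻¹α₃⁻¹α₂βα₂⁻¹α₃α₁β; (v) the lantern relation α₃α₁δ₂δ₃ = γ₂σ₂α₂ holds; and (vi) the two-holed torus relation δ₁γ₂ = (α₁α₃β)⁴ holds. Then δ₁δ₂δ₃ = (α₁α₂α₃β)³ (the star relation). -/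
/-- Star relation (group-theoretic content of the three-holed torus relation):
`δ₁δ₂δ₃ = (α₁α₂α₃β)³` in the mapping class group `Γ_{1,3}`. -/
theorem star_relation (G : Type*) [Group G]
    (α₁ α₂ α₃ β δ₁ δ₂ δ₃ γ₂ σ₂ : G)
    (hδ₁ : ∀ g : G, δ₁ * g = g * δ₁)
    (hδ₂ : ∀ g : G, δ₂ * g = g * δ₂)
    (hδ₃ : ∀ g : G, δ₃ * g = g * δ₃)
    (hc12 : α₁ * α₂ = α₂ * α₁)
    (hc13 : α₁ * α₃ = α₃ * α₁)
    (hc23 : α₂ * α₃ = α₃ * α₂)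
    (hbraid₁ : α₁ * β * α₁ = β * α₁ * β)
    (hbraid₂ : α₂ * β * α₂ = β * α₂ * β)
    (hbraid₃ : α₃ * β * α₃ = β * α₃ * β)
    (hσ₂ : σ₂ = β⁻¹ * α₁⁻¹ * α₃⁻¹ * α₂ * β * α₂⁻¹ * α₃ * α₁ * β)
    (hlantern : α₃ * α₁ * δ₂ * δ₃ = γ₂ * σ₂ * α₂)
    (htwoholed : δ₁ * γ₂ = (α₁ * α₃ * β) ^ 4) :
    δ₁ * δ₂ * δ₃ = (α₁ * α₂ * α₃ * β) ^ 3 := by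
  -- right-associated versions of the commutation relations
  have c12t : ∀ t : G, α₁ * (α₂ * t) = α₂ * (α₁ * t) := fun t => by
    rw [← mul_assoc, hc12, mul_assoc]
  have c13t : ∀ t : G, α₁ * (α₃ * t) = α₃ * (α₁ * t) := fun t => by
    rw [← mul_assoc, hc13, mul_assoc]
  have c23t : ∀ t : G, α₂ * (α₃ * t) = α₃ * (α₂ * t) := fun t => by
    rw [← mul_assoc, hc23, mul_assoc]
  -- right-associated versions of the braid relations
  have b1t : ∀ t : G, α₁ * (β * (α₁ * t)) = β * (α₁ * (β * t)) := fun t => by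
    rw [← mul_assoc, ← mul_assoc, hbraid₁, mul_assoc, mul_assoc]
  have b2t : ∀ t : G, α₂ * (β * (α₂ * t)) = β * (α₂ * (β * t)) := fun t => by
    rw [← mul_assoc, ← mul_assoc, hbraid₂, mul_assoc, mul_assoc]
  have b3t : ∀ t : G, α₃ * (β * (α₃ * t)) = β * (α₃ * (β * t)) := fun t => by
    rw [← mul_assoc, ← mul_assoc, hbraid₃, mul_assoc, mul_assoc]
  have b1e : α₁ * (β * α₁) = β * (α₁ * β) := by rw [← mul_assoc, hbraid₁, mul_assoc]
  have b2e : α₂ * (β * α₂) = β * (α₂ * β) := by rw [← mul_assoc, hbraid₂, mul_assoc]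
  have b3e : α₃ * (β * α₃) = β * (α₃ * β) := by rw [← mul_assoc, hbraid₃, mul_assoc]
  -- mixed commutation lemmas with inverses
  have cinv1 : ∀ t : G, α₃⁻¹ * (α₁ * t) = α₁ * (α₃⁻¹ * t) := fun t => by
    rw [← mul_assoc, ← mul_assoc, ((show Commute α₁ α₃ from hc13).inv_right.eq)]
  have cinv2 : ∀ t : G, α₃ * (α₁⁻¹ * t) = α₁⁻¹ * (α₃ * t) := fun t => by
    rw [← mul_assoc, ← mul_assoc, ← ((show Commute α₁ α₃ from hc13).inv_left.eq)]
  -- conjugation form of the second braid relation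
  have bb2t : ∀ t : G, β * (α₂ * (β * (α₂⁻¹ * t))) = α₂ * (β * t) := fun t => by
    rw [← mul_assoc, ← mul_assoc, ← hbraid₂]; group
  -- the positive-word identity (word problem in the Artin group of type D₄)
  have key : β * (α₁ * (α₃ * (β * (α₁ * (α₃ * (α₂ * (β * (α₃ * (α₁ * (β * α₂))))))))))
      = α₁ * (α₂ * (α₃ * (β * (α₁ * (α₂ * (α₃ * (β * (α₁ * (α₂ * (α₃ * β)))))))))) := by
      calc β * (α₁ * (α₃ * (β * (α₁ * (α₃ * (α₂ * (β * (α₃ * (α₁ * (β * (α₂)))))))))))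
        _ = β * (α₃ * (α₁ * (β * (α₁ * (α₃ * (α₂ * (β * (α₃ * (α₁ * (β * (α₂))))))))))) := by rw [c13t (β * (α₁ * (α₃ * (α₂ * (β * (α₃ * (α₁ * (β * (α₂)))))))))]
        _ = β * (α₃ * (β * (α₁ * (β * (α₃ * (α₂ * (β * (α₃ * (α₁ * (β * (α₂))))))))))) := by rw [b1t (α₃ * (α₂ * (β * (α₃ * (α₁ * (β * (α₂)))))))]
        _ = α₃ * (β * (α₃ * (α₁ * (β * (α₃ * (α₂ * (β * (α₃ * (α₁ * (β * (α₂))))))))))) := by rw [← b3t (α₁ * (β * (α₃ * (α₂ * (β * (α₃ * (α₁ * (β * (α₂)))))))))]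
        _ = α₃ * (β * (α₁ * (α₃ * (β * (α₃ * (α₂ * (β * (α₃ * (α₁ * (β * (α₂))))))))))) := by rw [← c13t (β * (α₃ * (α₂ * (β * (α₃ * (α₁ * (β * (α₂))))))))]
        _ = α₃ * (β * (α₁ * (β * (α₃ * (β * (α₂ * (β * (α₃ * (α₁ * (β * (α₂))))))))))) := by rw [b3t (α₂ * (β * (α₃ * (α₁ * (β * (α₂))))))]
        _ = α₃ * (β * (α₁ * (β * (α₃ * (α₂ * (β * (α₂ * (α₃ * (α₁ * (β * (α₂))))))))))) := by rw [← b2t (α₃ * (α₁ * (β * (α₂))))]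
        _ = α₃ * (β * (α₁ * (β * (α₂ * (α₃ * (β * (α₂ * (α₃ * (α₁ * (β * (α₂))))))))))) := by rw [← c23t (β * (α₂ * (α₃ * (α₁ * (β * (α₂))))))]
        _ = α₃ * (β * (α₁ * (β * (α₂ * (α₃ * (β * (α₃ * (α₂ * (α₁ * (β * (α₂))))))))))) := by rw [c23t (α₁ * (β * (α₂)))]
        _ = α₃ * (β * (α₁ * (β * (α₂ * (α₃ * (β * (α₃ * (α₁ * (α₂ * (β * (α₂))))))))))) := by rw [← c12t (β * (α₂))]
        _ = α₃ * (β * (α₁ * (β * (α₂ * (α₃ * (β * (α₃ * (α₁ * (β * (α₂ * (β))))))))))) := by rw [b2e]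
        _ = α₃ * (β * (α₁ * (β * (α₂ * (β * (α₃ * (β * (α₁ * (β * (α₂ * (β))))))))))) := by rw [b3t (α₁ * (β * (α₂ * (β))))]
        _ = α₃ * (β * (α₁ * (β * (α₂ * (β * (α₃ * (α₁ * (β * (α₁ * (α₂ * (β))))))))))) := by rw [← b1t (α₂ * (β))]
        _ = α₃ * (α₁ * (β * (α₁ * (α₂ * (β * (α₃ * (α₁ * (β * (α₁ * (α₂ * (β))))))))))) := by rw [← b1t (α₂ * (β * (α₃ * (α₁ * (β * (α₁ * (α₂ * (β))))))))]
        _ = α₃ * (α₁ * (β * (α₁ * (α₂ * (β * (α₁ * (α₃ * (β * (α₁ * (α₂ * (β))))))))))) := by rw [← c13t (β * (α₁ * (α₂ * (β))))]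
        _ = α₃ * (α₁ * (β * (α₂ * (α₁ * (β * (α₁ * (α₃ * (β * (α₁ * (α₂ * (β))))))))))) := by rw [c12t (β * (α₁ * (α₃ * (β * (α₁ * (α₂ * (β)))))))]
        _ = α₃ * (α₁ * (β * (α₂ * (β * (α₁ * (β * (α₃ * (β * (α₁ * (α₂ * (β))))))))))) := by rw [b1t (α₃ * (β * (α₁ * (α₂ * (β)))))]
        _ = α₃ * (α₁ * (β * (α₂ * (β * (α₁ * (α₃ * (β * (α₃ * (α₁ * (α₂ * (β))))))))))) := by rw [← b3t (α₁ * (α₂ * (β)))]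
        _ = α₃ * (α₁ * (α₂ * (β * (α₂ * (α₁ * (α₃ * (β * (α₃ * (α₁ * (α₂ * (β))))))))))) := by rw [← b2t (α₁ * (α₃ * (β * (α₃ * (α₁ * (α₂ * (β)))))))]
        _ = α₃ * (α₁ * (α₂ * (β * (α₂ * (α₁ * (α₃ * (β * (α₁ * (α₃ * (α₂ * (β))))))))))) := by rw [← c13t (α₂ * (β))]
        _ = α₃ * (α₁ * (α₂ * (β * (α₂ * (α₁ * (α₃ * (β * (α₁ * (α₂ * (α₃ * (β))))))))))) := by rw [← c23t (β)]
        _ = α₃ * (α₁ * (α₂ * (β * (α₁ * (α₂ * (α₃ * (β * (α₁ * (α₂ * (α₃ * (β))))))))))) := by rw [← c12t (α₃ * (β * (α₁ * (α₂ * (α₃ * (β))))))]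
        _ = α₁ * (α₃ * (α₂ * (β * (α₁ * (α₂ * (α₃ * (β * (α₁ * (α₂ * (α₃ * (β))))))))))) := by rw [← c13t (α₂ * (β * (α₁ * (α₂ * (α₃ * (β * (α₁ * (α₂ * (α₃ * (β))))))))))]
        _ = α₁ * (α₂ * (α₃ * (β * (α₁ * (α₂ * (α₃ * (β * (α₁ * (α₂ * (α₃ * (β))))))))))) := by rw [← c23t (β * (α₁ * (α₂ * (α₃ * (β * (α₁ * (α₂ * (α₃ * (β)))))))))]
  -- main reduction
  have p4 : (α₁ * α₃ * β) ^ 4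
      = (α₁ * α₃ * β) * ((α₁ * α₃ * β) * ((α₁ * α₃ * β) * (α₁ * α₃ * β))) := by
    rw [pow_succ, pow_succ, pow_succ, pow_one]; group
  have p3 : (α₁ * α₂ * α₃ * β) ^ 3
      = (α₁ * α₂ * α₃ * β) * ((α₁ * α₂ * α₃ * β) * (α₁ * α₂ * α₃ * β)) := by
    rw [pow_succ, pow_succ, pow_one]; group
  have key2 : α₁⁻¹ * (α₃⁻¹ * ((α₁ * α₃ * β) ^ 4 * (σ₂ * α₂))) = (α₁ * α₂ * α₃ * β) ^ 3 := by
    rw [hσ₂, p4, p3]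
    calc α₁⁻¹ * (α₃⁻¹ * ((α₁ * α₃ * β) * ((α₁ * α₃ * β) * ((α₁ * α₃ * β) * (α₁ * α₃ * β))) *
          ((β⁻¹ * α₁⁻¹ * α₃⁻¹ * α₂ * β * α₂⁻¹ * α₃ * α₁ * β) * α₂)))
        = α₁⁻¹ * (α₃⁻¹ * (α₁ * (α₃ * (β * (α₁ * (α₃ * (β * (α₁ * (α₃ * (β * (α₁ * (α₃ *
            (α₁⁻¹ * (α₃⁻¹ * (α₂ * (β * (α₂⁻¹ * (α₃ * (α₁ * (β * α₂)))))))))))))))))))) := by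
          group
      _ = α₁⁻¹ * (α₁ * (α₃⁻¹ * (α₃ * (β * (α₁ * (α₃ * (β * (α₁ * (α₃ * (β * (α₁ * (α₁⁻¹ *
            (α₃ * (α₃⁻¹ * (α₂ * (β * (α₂⁻¹ * (α₃ * (α₁ * (β * α₂)))))))))))))))))))) := by
          rw [cinv1, cinv2]
      _ = β * (α₁ * (α₃ * (β * (α₁ * (α₃ * (β * (α₂ * (β * (α₂⁻¹ * (α₃ * (α₁ *
            (β * α₂)))))))))))) := by group
      _ = β * (α₁ * (α₃ * (β * (α₁ * (α₃ * (α₂ * (β * (α₃ * (α₁ * (β * α₂)))))))))) := by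
          rw [bb2t]
      _ = α₁ * (α₂ * (α₃ * (β * (α₁ * (α₂ * (α₃ * (β * (α₁ * (α₂ * (α₃ * β)))))))))) :=
          key
      _ = (α₁ * α₂ * α₃ * β) * ((α₁ * α₂ * α₃ * β) * (α₁ * α₂ * α₃ * β)) := by group
  have h1 : δ₂ * δ₃ = α₁⁻¹ * (α₃⁻¹ * (γ₂ * σ₂ * α₂)) := by
    rw [← hlantern]; group
  calc δ₁ * δ₂ * δ₃ = δ₁ * (δ₂ * δ₃) := by rw [mul_assoc]
    _ = δ₁ * (α₁⁻¹ * (α₃⁻¹ * (γ₂ * σ₂ * α₂))) := by rw [h1]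
    _ = α₁⁻¹ * (α₃⁻¹ * ((δ₁ * γ₂) * (σ₂ * α₂))) := by simp only [hδ₁, mul_assoc]
    _ = α₁⁻¹ * (α₃⁻¹ * ((α₁ * α₃ * β) ^ 4 * (σ₂ * α₂))) := by rw [htwoholed]
    _ = (α₁ * α₂ * α₃ * β) ^ 3 := key2
end

section
/- Let G be a group and let α₁, α₂, α₃, α₄, β, δ₁, δ₂, δ₃, δ₄, γ₃, σ₃ be elements of G. Assume: (i) δ₁, δ₂, δ₃, δ₄ are central in G; (ii) α₁, α₂, α₄ pairwise commute; (iii) the braid relations αᵢβαᵢ = βαᵢβ hold for i = 1, 2, 3, 4; (iv) the lantern relation α₄α₂δ₃δ₄ = γ₃σ₃α₃ holds; and (v) the three-holed torus relation δ₁δ₂γ₃ = (α₁α₂α₄β)³ holds. Then δ₁δ₂δ₃δ₄ = (α₁α₂α₄β)² σ₃ α₃ α₁ β. -/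
/-- Four-holed torus relation (group-theoretic content):
`δ₁δ₂δ₃δ₄ = (α₁α₂α₄β)² σ₃ α₃ α₁ β` in the mapping class group `Γ_{1,4}`. -/
theorem four_holed_torus_relation (G : Type*) [Group G]
    (α₁ α₂ α₃ α₄ β δ₁ δ₂ δ₃ δ₄ γ₃ σ₃ : G)
    (hδ₁ : ∀ g : G, δ₁ * g = g * δ₁)
    (hδ₂ : ∀ g : G, δ₂ * g = g * δ₂)
    (hδ₃ : ∀ g : G, δ₃ * g = g * δ₃)
    (hδ₄ : ∀ g : G, δ₄ * g = g * δ₄)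
    (hc12 : α₁ * α₂ = α₂ * α₁)
    (hc14 : α₁ * α₄ = α₄ * α₁)
    (hc24 : α₂ * α₄ = α₄ * α₂)
    (hbraid₁ : α₁ * β * α₁ = β * α₁ * β)
    (hbraid₂ : α₂ * β * α₂ = β * α₂ * β)
    (hbraid₃ : α₃ * β * α₃ = β * α₃ * β)
    (hbraid₄ : α₄ * β * α₄ = β * α₄ * β)
    (hlantern : α₄ * α₂ * δ₃ * δ₄ = γ₃ * σ₃ * α₃)
    (hthreeholed : δ₁ * δ₂ * γ₃ = (α₁ * α₂ * α₄ * β) ^ 3) :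
    δ₁ * δ₂ * δ₃ * δ₄ = (α₁ * α₂ * α₄ * β) ^ 2 * σ₃ * α₃ * α₁ * β := by
  -- the four central elements commute with everything
  have hD : ∀ g : G, (δ₁ * δ₂ * (δ₃ * δ₄)) * g = g * (δ₁ * δ₂ * (δ₃ * δ₄)) :=
    fun g => (Commute.mul_left (Commute.mul_left (hδ₁ g) (hδ₂ g))
      (Commute.mul_left (hδ₃ g) (hδ₄ g))).eq
  -- combine lantern and three-holed torus relations
  have h1 : (α₁ * α₂ * α₄ * β) ^ 3 * σ₃ * α₃ = δ₁ * δ₂ * (α₄ * α₂ * δ₃ * δ₄) := by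
    rw [← hthreeholed, hlantern]; group
  -- shuffle the central δ₃, δ₄ to the front
  have h2 : α₄ * α₂ * δ₃ * δ₄ = δ₃ * (δ₄ * (α₄ * α₂)) := by
    rw [← hδ₃ (α₄ * α₂), mul_assoc, ← hδ₄ (α₄ * α₂)]
  -- commutation of the α's
  have hw : α₄ * α₂ * (α₁ * β) = α₁ * α₂ * α₄ * β := by
    rw [← mul_assoc, mul_assoc α₄ α₂ α₁, ← hc12, ← mul_assoc, ← hc14, mul_assoc α₁ α₄ α₂,
      ← hc24, ← mul_assoc]
  calc δ₁ * δ₂ * δ₃ * δ₄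
      = δ₁ * δ₂ * (δ₃ * δ₄) := by group
    _ = δ₁ * δ₂ * (δ₃ * δ₄) * ((α₁ * α₂ * α₄ * β)⁻¹ * (α₄ * α₂ * (α₁ * β))) := by
        rw [hw]; group
    _ = (α₁ * α₂ * α₄ * β)⁻¹ * (δ₁ * δ₂ * (δ₃ * δ₄) * (α₄ * α₂)) * (α₁ * β) := by
        rw [← mul_assoc (δ₁ * δ₂ * (δ₃ * δ₄)), hD ((α₁ * α₂ * α₄ * β)⁻¹)]; group
    _ = (α₁ * α₂ * α₄ * β)⁻¹ * (δ₁ * δ₂ * (δ₃ * (δ₄ * (α₄ * α₂)))) * (α₁ * β) := by group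
    _ = (α₁ * α₂ * α₄ * β)⁻¹ * (δ₁ * δ₂ * (α₄ * α₂ * δ₃ * δ₄)) * (α₁ * β) := by rw [← h2]
    _ = (α₁ * α₂ * α₄ * β)⁻¹ * ((α₁ * α₂ * α₄ * β) ^ 3 * σ₃ * α₃) * (α₁ * β) := by rw [h1]
    _ = (α₁ * α₂ * α₄ * β) ^ 2 * σ₃ * α₃ * α₁ * β := by
        simp only [pow_succ, pow_zero, one_mul]; group
end

section
/- Let G be a group and let α₁, α₂, α₃, α₄, β, δ₁, δ₂, δ₃, δ₄, γ₃ be elements of G. Assume: (i) δ₁, δ₂, δ₃, δ₄ are central in G; (ii) α₁, α₂, α₃, α₄ pairwise commute; (iii) the braid relations αᵢβαᵢ = βαᵢβ hold for i = 1, 2, 3, 4; (iv) the lantern relation α₄α₂δ₃δ₄ = γ₃σ₃α₃ holds, where σ₃ = β⁻¹α₄⁻¹α₂⁻¹α₃βα₃⁻¹α₂α₄β; and (v) the three-holed torus relation δ₁δ₂γ₃ = (α₁α₂α₄β)³ holds. Then δ₁δ₂δ₃δ₄ = (α₁α₃βα₂α₄β)². -/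
/-- Symmetric form of the four-holed torus relation:
`δ₁δ₂δ₃δ₄ = (α₁α₃βα₂α₄β)²` in the mapping class group `Γ_{1,4}`. -/
theorem four_holed_torus_relation_symmetric (G : Type*) [Group G]
    (α₁ α₂ α₃ α₄ β δ₁ δ₂ δ₃ δ₄ γ₃ : G)
    (hδ₁ : ∀ g : G, δ₁ * g = g * δ₁)
    (hδ₂ : ∀ g : G, δ₂ * g = g * δ₂)
    (hδ₃ : ∀ g : G, δ₃ * g = g * δ₃)
    (hδ₄ : ∀ g : G, δ₄ * g = g * δ₄)
    (hc12 : α₁ * α₂ = α₂ * α₁)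
    (hc13 : α₁ * α₃ = α₃ * α₁)
    (hc14 : α₁ * α₄ = α₄ * α₁)
    (hc23 : α₂ * α₃ = α₃ * α₂)
    (hc24 : α₂ * α₄ = α₄ * α₂)
    (hc34 : α₃ * α₄ = α₄ * α₃)
    (hbraid₁ : α₁ * β * α₁ = β * α₁ * β)
    (hbraid₂ : α₂ * β * α₂ = β * α₂ * β)
    (hbraid₃ : α₃ * β * α₃ = β * α₃ * β)
    (hbraid₄ : α₄ * β * α₄ = β * α₄ * β)
    (hlantern : α₄ * α₂ * δ₃ * δ₄ =
      γ₃ * (β⁻¹ * α₄⁻¹ * α₂⁻¹ * α₃ * β * α₃⁻¹ * α₂ * α₄ * β) * α₃)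
    (hthreeholed : δ₁ * δ₂ * γ₃ = (α₁ * α₂ * α₄ * β) ^ 3) :
    δ₁ * δ₂ * δ₃ * δ₄ = (α₁ * α₃ * β * α₂ * α₄ * β) ^ 2 := by
  -- generic swapping helper
  have swap : ∀ u v : G, u * v = v * u → ∀ x : G, u * (v * x) = v * (u * x) := by
    intro u v h x
    rw [← mul_assoc, h, mul_assoc]
  -- derived element relations
  have e3 : α₃ * β * α₃⁻¹ = β⁻¹ * α₃ * β := by
    apply mul_left_cancel (a := β)
    rw [← mul_assoc, ← mul_assoc, ← hbraid₃]
    group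
  have e1 : β * α₁ * β⁻¹ = α₁⁻¹ * β * α₁ := by
    apply mul_left_cancel (a := α₁)
    rw [← mul_assoc, ← mul_assoc, hbraid₁]
    group
  have kb3 : ∀ x : G, α₃ * (β * (α₃⁻¹ * x)) = β⁻¹ * (α₃ * (β * x)) := by
    intro x
    simp only [← mul_assoc]
    rw [e3]
  have kb1 : ∀ x : G, β * (α₁ * (β⁻¹ * x)) = α₁⁻¹ * (β * (α₁ * x)) := by
    intro x
    simp only [← mul_assoc]
    rw [e1]
  have c14i : α₄ * α₁⁻¹ = α₁⁻¹ * α₄ := by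
    apply mul_left_cancel (a := α₁)
    rw [← mul_assoc, hc14]
    group
  have c12i : α₂ * α₁⁻¹ = α₁⁻¹ * α₂ := by
    apply mul_left_cancel (a := α₁)
    rw [← mul_assoc, hc12]
    group
  -- Step 1: key relation from lantern + three-holed-torus + centrality
  have hkey : α₄ * (α₂ * (δ₁ * δ₂ * δ₃ * δ₄)) =
      (α₁ * α₂ * α₄ * β) ^ 3 *
        (β⁻¹ * α₄⁻¹ * α₂⁻¹ * α₃ * β * α₃⁻¹ * α₂ * α₄ * β) * α₃ := by
    calc α₄ * (α₂ * (δ₁ * δ₂ * δ₃ * δ₄))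
        = δ₁ * δ₂ * (α₄ * α₂ * δ₃ * δ₄) := by
          simp only [mul_assoc]
          rw [swap δ₂ α₄ (hδ₂ α₄), swap δ₂ α₂ (hδ₂ α₂),
            swap δ₁ α₄ (hδ₁ α₄), swap δ₁ α₂ (hδ₁ α₂)]
      _ = δ₁ * δ₂ * (γ₃ * (β⁻¹ * α₄⁻¹ * α₂⁻¹ * α₃ * β * α₃⁻¹ * α₂ * α₄ * β) * α₃) := by
          rw [hlantern]
      _ = δ₁ * δ₂ * γ₃ * ((β⁻¹ * α₄⁻¹ * α₂⁻¹ * α₃ * β * α₃⁻¹ * α₂ * α₄ * β) * α₃) := by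
          group
      _ = (α₁ * α₂ * α₄ * β) ^ 3 *
            (β⁻¹ * α₄⁻¹ * α₂⁻¹ * α₃ * β * α₃⁻¹ * α₂ * α₄ * β) * α₃ := by
          rw [hthreeholed]
          group
  -- Step 2: word computation
  have hword : (α₁ * α₂ * α₄ * β) ^ 3 *
      (β⁻¹ * α₄⁻¹ * α₂⁻¹ * α₃ * β * α₃⁻¹ * α₂ * α₄ * β) * α₃ =
      α₄ * (α₂ * (α₁ * (β * (α₂ * (α₄ * (β * (α₁ * (α₃ * (β * (α₂ * (α₄ * (β * α₃)))))))))))) := by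
    simp only [pow_succ, pow_zero, one_mul, mul_assoc, inv_mul_cancel_left,
      mul_inv_cancel_left]
    rw [kb3, kb1, swap α₄ α₁⁻¹ c14i, swap α₂ α₁⁻¹ c12i]
    simp only [mul_inv_cancel_left]
    rw [swap α₁ α₂ hc12, swap α₁ α₄ hc14, swap α₂ α₄ hc24]
  -- Step 3: identify δ₁δ₂δ₃δ₄ with the reduced word M
  have hM : δ₁ * δ₂ * δ₃ * δ₄ =
      α₁ * (β * (α₂ * (α₄ * (β * (α₁ * (α₃ * (β * (α₂ * (α₄ * (β * α₃)))))))))) := by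
    have h := hkey.trans hword
    exact mul_left_cancel (mul_left_cancel h)
  -- Step 4: centrality gives the symmetric form
  have hcent : δ₁ * δ₂ * δ₃ * δ₄ * α₃ = α₃ * (δ₁ * δ₂ * δ₃ * δ₄) := by
    simp only [mul_assoc]
    rw [hδ₄ α₃, swap δ₃ α₃ (hδ₃ α₃), swap δ₂ α₃ (hδ₂ α₃), swap δ₁ α₃ (hδ₁ α₃)]
  rw [hM] at hcent
  rw [hM]
  apply mul_right_cancel (b := α₃)
  rw [hcent]
  simp only [pow_succ, pow_zero, one_mul, mul_assoc]
  rw [swap α₃ α₁ hc13.symm]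
end

section
/- Let G be a group and let α₁, α₂, α₃, α₄, α₅, β, δ₁, ..., δ₅, γ₄, σ₃, σ₄ be elements of G. Assume: (i) δ₁, ..., δ₅ are central in G; (ii) α₂α₃ = α₃α₂, α₂α₅ = α₅α₂ and α₃α₅ = α₅α₃; (iii) the braid relations αᵢβαᵢ = βαᵢβ hold for i = 1, ..., 5; (iv) the lantern relation α₅α₃δ₄δ₅ = γ₄σ₄α₄ holds; and (v) the four-holed torus relation δ₁δ₂δ₃γ₄ = (α₃α₅α₂β)² σ₃ α₁α₃β holds. Then δ₁δ₂δ₃δ₄δ₅ = α₂α₃α₅β σ₃ α₁α₃β σ₄ α₄α₂β. -/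
/-- Five-holed torus relation (group-theoretic content):
`δ₁δ₂δ₃δ₄δ₅ = α₂α₃α₅β σ₃ α₁α₃β σ₄ α₄α₂β` in the mapping class group `Γ_{1,5}`. -/
theorem five_holed_torus_relation (G : Type*) [Group G]
    (α₁ α₂ α₃ α₄ α₅ β δ₁ δ₂ δ₃ δ₄ δ₅ γ₄ σ₃ σ₄ : G)
    (hδ₁ : ∀ g : G, δ₁ * g = g * δ₁)
    (hδ₂ : ∀ g : G, δ₂ * g = g * δ₂)
    (hδ₃ : ∀ g : G, δ₃ * g = g * δ₃)
    (hδ₄ : ∀ g : G, δ₄ * g = g * δ₄)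
    (hδ₅ : ∀ g : G, δ₅ * g = g * δ₅)
    (hc23 : α₂ * α₃ = α₃ * α₂)
    (hc25 : α₂ * α₅ = α₅ * α₂)
    (hc35 : α₃ * α₅ = α₅ * α₃)
    (hbraid₁ : α₁ * β * α₁ = β * α₁ * β)
    (hbraid₂ : α₂ * β * α₂ = β * α₂ * β)
    (hbraid₃ : α₃ * β * α₃ = β * α₃ * β)
    (hbraid₄ : α₄ * β * α₄ = β * α₄ * β)
    (hbraid₅ : α₅ * β * α₅ = β * α₅ * β)
    (hlantern : α₅ * α₃ * δ₄ * δ₅ = γ₄ * σ₄ * α₄)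
    (hfourholed : δ₁ * δ₂ * δ₃ * γ₄ =
      (α₃ * α₅ * α₂ * β) ^ 2 * σ₃ * α₁ * α₃ * β) :
    δ₁ * δ₂ * δ₃ * δ₄ * δ₅ =
      α₂ * α₃ * α₅ * β * σ₃ * α₁ * α₃ * β * σ₄ * α₄ * α₂ * β := by
  have swap : ∀ (c : G), (∀ g : G, c * g = g * c) → ∀ x y : G,
      x * (c * y) = c * (x * y) := by
    intro c hc x y
    rw [← mul_assoc, ← hc, mul_assoc]
  have h1 : α₂ * α₃ * α₅ = α₃ * α₅ * α₂ := by
    rw [hc23, mul_assoc, hc25, ← mul_assoc]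
  have h2 : α₅ * α₃ * α₂ = α₂ * α₃ * α₅ := by
    rw [← hc35, mul_assoc, ← hc25, ← mul_assoc, ← hc23]
  have key : (α₃ * α₅ * α₂ * β) ^ 2 = (α₂ * α₃ * α₅ * β) ^ 2 := by
    rw [pow_two, pow_two, ← h1]
  have hres : α₅ * (α₃ * (α₂ * β)) = α₂ * α₃ * α₅ * β := by
    rw [← mul_assoc, ← mul_assoc, h2]
  have hσα : σ₄ * α₄ = γ₄⁻¹ * (α₅ * α₃ * δ₄ * δ₅) := by rw [hlantern]; group
  have hγ : γ₄⁻¹ = ((α₃ * α₅ * α₂ * β) ^ 2 * σ₃ * α₁ * α₃ * β)⁻¹ * (δ₁ * δ₂ * δ₃) := by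
    rw [← hfourholed]; group
  rw [show α₂ * α₃ * α₅ * β * σ₃ * α₁ * α₃ * β * σ₄ * α₄ * α₂ * β
      = α₂ * α₃ * α₅ * β * σ₃ * α₁ * α₃ * β * (σ₄ * α₄) * (α₂ * β) from by group,
    hσα, hγ, key]
  symm
  trans (α₂ * α₃ * α₅ * β)⁻¹ *
      (δ₁ * (δ₂ * (δ₃ * (α₅ * (α₃ * (δ₄ * (δ₅ * (α₂ * β))))))))
  · group
  rw [swap δ₄ hδ₄ α₃, swap δ₄ hδ₄ α₅, swap δ₅ hδ₅ α₃, swap δ₅ hδ₅ α₅, hres,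
    swap δ₁ hδ₁, swap δ₂ hδ₂, swap δ₃ hδ₃, swap δ₄ hδ₄, swap δ₅ hδ₅]
  group
end

section
/- Let G be a group and let α₁, ..., α₆, β, δ₁, ..., δ₆, γ₅, σ₃, σ₄, σ₅ be elements of G, and set β₂ = α₂βα₂⁻¹. Assume: (i) δ₁, ..., δ₆ are central in G; (ii) α₄α₆ = α₆α₄; (iii) α₂σ₃ = σ₃α₂; (iv) the braid relations αᵢβαᵢ = βαᵢβ hold for i = 1, ..., 6; (v) the lantern relation α₆α₄δ₅δ₆ = γ₅σ₅α₅ holds; and (vi) the five-holed torus relation δ₁δ₂δ₃δ₄γ₅ = α₄α₆α₂β σ₃ α₃α₆β σ₄ α₁α₄β holds. Then δ₁δ₂δ₃δ₄δ₅δ₆ = α₂α₃α₆β σ₄ α₁α₄β σ₅ α₅ β₂ σ₃. -/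
/-- Six-holed torus relation (group-theoretic content):
`δ₁⋯δ₆ = α₂α₃α₆β σ₄ α₁α₄β σ₅ α₅ β₂ σ₃` in the mapping class group `Γ_{1,6}`,
where `β₂ = α₂βα₂⁻¹`. -/
theorem six_holed_torus_relation (G : Type*) [Group G]
    (α₁ α₂ α₃ α₄ α₅ α₆ β δ₁ δ₂ δ₃ δ₄ δ₅ δ₆ γ₅ σ₃ σ₄ σ₅ β₂ : G)
    (hβ₂ : β₂ = α₂ * β * α₂⁻¹)
    (hδ₁ : ∀ g : G, δ₁ * g = g * δ₁)
    (hδ₂ : ∀ g : G, δ₂ * g = g * δ₂)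
    (hδ₃ : ∀ g : G, δ₃ * g = g * δ₃)
    (hδ₄ : ∀ g : G, δ₄ * g = g * δ₄)
    (hδ₅ : ∀ g : G, δ₅ * g = g * δ₅)
    (hδ₆ : ∀ g : G, δ₆ * g = g * δ₆)
    (hc46 : α₄ * α₆ = α₆ * α₄)
    (hc2σ₃ : α₂ * σ₃ = σ₃ * α₂)
    (hbraid₁ : α₁ * β * α₁ = β * α₁ * β)
    (hbraid₂ : α₂ * β * α₂ = β * α₂ * β)
    (hbraid₃ : α₃ * β * α₃ = β * α₃ * β)
    (hbraid₄ : α₄ * β * α₄ = β * α₄ * β)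
    (hbraid₅ : α₅ * β * α₅ = β * α₅ * β)
    (hbraid₆ : α₆ * β * α₆ = β * α₆ * β)
    (hlantern : α₆ * α₄ * δ₅ * δ₆ = γ₅ * σ₅ * α₅)
    (hfiveholed : δ₁ * δ₂ * δ₃ * δ₄ * γ₅ =
      α₄ * α₆ * α₂ * β * σ₃ * α₃ * α₆ * β * σ₄ * α₁ * α₄ * β) :
    δ₁ * δ₂ * δ₃ * δ₄ * δ₅ * δ₆ =
      α₂ * α₃ * α₆ * β * σ₄ * α₁ * α₄ * β * σ₅ * α₅ * β₂ * σ₃ := by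
  -- solve for γ₅ and σ₄ from the lantern and five-holed torus relations
  have hγ₅ : γ₅ = α₆ * α₄ * δ₅ * δ₆ * α₅⁻¹ * σ₅⁻¹ := by
    have h : γ₅ * σ₅ * α₅ = α₆ * α₄ * δ₅ * δ₆ := hlantern.symm
    rw [← h]; group
  have hσ₄ : σ₄ = (α₄ * α₆ * α₂ * β * σ₃ * α₃ * α₆ * β)⁻¹ *
      (δ₁ * δ₂ * δ₃ * δ₄ * γ₅) * (α₁ * α₄ * β)⁻¹ := by
    rw [hfiveholed]; group
  have hσ₃inv : α₂ * σ₃⁻¹ = σ₃⁻¹ * α₂ := by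
    calc α₂ * σ₃⁻¹ = σ₃⁻¹ * (σ₃ * α₂) * σ₃⁻¹ := by group
    _ = σ₃⁻¹ * (α₂ * σ₃) * σ₃⁻¹ := by rw [hc2σ₃]
    _ = σ₃⁻¹ * α₂ := by group
  have hrev : δ₁ * δ₂ * δ₃ * δ₄ * δ₅ * δ₆ = δ₆ * δ₅ * δ₄ * δ₃ * δ₂ * δ₁ := by
    symm
    calc δ₆ * δ₅ * δ₄ * δ₃ * δ₂ * δ₁
        = δ₁ * (δ₆ * δ₅ * δ₄ * δ₃ * δ₂) := (hδ₁ (δ₆ * δ₅ * δ₄ * δ₃ * δ₂)).symm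
      _ = δ₁ * (δ₂ * (δ₆ * δ₅ * δ₄ * δ₃)) := by rw [← hδ₂ (δ₆ * δ₅ * δ₄ * δ₃)]
      _ = δ₁ * (δ₂ * (δ₃ * (δ₆ * δ₅ * δ₄))) := by rw [← hδ₃ (δ₆ * δ₅ * δ₄)]
      _ = δ₁ * (δ₂ * (δ₃ * (δ₄ * (δ₆ * δ₅)))) := by rw [← hδ₄ (δ₆ * δ₅)]
      _ = δ₁ * (δ₂ * (δ₃ * (δ₄ * (δ₅ * δ₆)))) := by rw [← hδ₅ δ₆]
      _ = δ₁ * δ₂ * δ₃ * δ₄ * δ₅ * δ₆ := by group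
  rw [hβ₂, hσ₄, hγ₅]
  have step1 : α₂ * α₃ * α₆ * β *
      ((α₄ * α₆ * α₂ * β * σ₃ * α₃ * α₆ * β)⁻¹ *
        (δ₁ * δ₂ * δ₃ * δ₄ * (α₆ * α₄ * δ₅ * δ₆ * α₅⁻¹ * σ₅⁻¹)) *
        (α₁ * α₄ * β)⁻¹) * α₁ * α₄ * β * σ₅ * α₅ * (α₂ * β * α₂⁻¹) * σ₃
      = (α₂ * σ₃⁻¹ * β⁻¹ * α₂⁻¹) * (α₆⁻¹ * (α₄⁻¹ *
          (δ₁ * (δ₂ * (δ₃ * (δ₄ *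
            (α₆ * α₄ * (δ₅ * (δ₆ * (α₂ * β * α₂⁻¹ * σ₃)))))))))) := by
    group
  rw [step1,
    hδ₄ (α₆ * α₄ * (δ₅ * (δ₆ * (α₂ * β * α₂⁻¹ * σ₃)))),
    hδ₃ (α₆ * α₄ * (δ₅ * (δ₆ * (α₂ * β * α₂⁻¹ * σ₃))) * δ₄),
    hδ₂ (α₆ * α₄ * (δ₅ * (δ₆ * (α₂ * β * α₂⁻¹ * σ₃))) * δ₄ * δ₃),
    hδ₁ (α₆ * α₄ * (δ₅ * (δ₆ * (α₂ * β * α₂⁻¹ * σ₃))) * δ₄ * δ₃ * δ₂),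
    hδ₆ (α₂ * β * α₂⁻¹ * σ₃),
    hδ₅ (α₂ * β * α₂⁻¹ * σ₃ * δ₆),
    ← hc46, hσ₃inv, hrev]
  group
end

section
/- Let G be a group and let α₁, ..., α₇, β, δ₁, ..., δ₇, γ₆, σ₃, σ₄, σ₅, σ₆ be elements of G, and set β₃ = α₃βα₃⁻¹ and β₅ = α₅βα₅⁻¹. Assume: (i) δ₁, ..., δ₇ are central in G; (ii) α₅α₇ = α₇α₅; (iii) α₃σ₄ = σ₄α₃; (iv) the braid relations αᵢβαᵢ = βαᵢβ hold for i = 1, ..., 7; (v) the lantern relation α₇α₅δ₆δ₇ = γ₆σ₆α₆ holds; and (vi) the six-holed torus relation δ₁δ₂δ₃δ₄δ₅γ₆ = α₅α₇α₃β σ₄ α₄α₁β σ₅ α₂ β₅ σ₃ holds. Then δ₁δ₂δ₃δ₄δ₅δ₆δ₇ = α₃α₄α₁β σ₅ α₂ β₅ σ₃ σ₆ α₆ β₃ σ₄. -/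
/-- Seven-holed torus relation (group-theoretic content):
`δ₁⋯δ₇ = α₃α₄α₁β σ₅ α₂ β₅ σ₃ σ₆ α₆ β₃ σ₄` in the mapping class group `Γ_{1,7}`,
where `β₃ = α₃βα₃⁻¹` and `β₅ = α₅βα₅⁻¹`. -/
theorem seven_holed_torus_relation (G : Type*) [Group G]
    (α₁ α₂ α₃ α₄ α₅ α₆ α₇ β δ₁ δ₂ δ₃ δ₄ δ₅ δ₆ δ₇ γ₆ σ₃ σ₄ σ₅ σ₆ β₃ β₅ : G)
    (hβ₃ : β₃ = α₃ * β * α₃⁻¹)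
    (hβ₅ : β₅ = α₅ * β * α₅⁻¹)
    (hδ₁ : ∀ g : G, δ₁ * g = g * δ₁)
    (hδ₂ : ∀ g : G, δ₂ * g = g * δ₂)
    (hδ₃ : ∀ g : G, δ₃ * g = g * δ₃)
    (hδ₄ : ∀ g : G, δ₄ * g = g * δ₄)
    (hδ₅ : ∀ g : G, δ₅ * g = g * δ₅)
    (hδ₆ : ∀ g : G, δ₆ * g = g * δ₆)
    (hδ₇ : ∀ g : G, δ₇ * g = g * δ₇)
    (hc57 : α₅ * α₇ = α₇ * α₅)
    (hc3σ₄ : α₃ * σ₄ = σ₄ * α₃)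
    (hbraid₁ : α₁ * β * α₁ = β * α₁ * β)
    (hbraid₂ : α₂ * β * α₂ = β * α₂ * β)
    (hbraid₃ : α₃ * β * α₃ = β * α₃ * β)
    (hbraid₄ : α₄ * β * α₄ = β * α₄ * β)
    (hbraid₅ : α₅ * β * α₅ = β * α₅ * β)
    (hbraid₆ : α₆ * β * α₆ = β * α₆ * β)
    (hbraid₇ : α₇ * β * α₇ = β * α₇ * β)
    (hlantern : α₇ * α₅ * δ₆ * δ₇ = γ₆ * σ₆ * α₆)
    (hsixholed : δ₁ * δ₂ * δ₃ * δ₄ * δ₅ * γ₆ =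
      α₅ * α₇ * α₃ * β * σ₄ * α₄ * α₁ * β * σ₅ * α₂ * β₅ * σ₃) :
    δ₁ * δ₂ * δ₃ * δ₄ * δ₅ * δ₆ * δ₇ =
      α₃ * α₄ * α₁ * β * σ₅ * α₂ * β₅ * σ₃ * σ₆ * α₆ * β₃ * σ₄ := by

  -- centrality of the product of all boundary twists
  have c1 : ∀ g : G, Commute δ₁ g := hδ₁
  have c2 : ∀ g : G, Commute δ₂ g := hδ₂
  have c3 : ∀ g : G, Commute δ₃ g := hδ₃
  have c4 : ∀ g : G, Commute δ₄ g := hδ₄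
  have c5 : ∀ g : G, Commute δ₅ g := hδ₅
  have c6 : ∀ g : G, Commute δ₆ g := hδ₆
  have c7 : ∀ g : G, Commute δ₇ g := hδ₇
  have hD : ∀ g : G, δ₁ * δ₂ * δ₃ * δ₄ * δ₅ * δ₆ * δ₇ * g
      = g * (δ₁ * δ₂ * δ₃ * δ₄ * δ₅ * δ₆ * δ₇) := fun g =>
    ((((((((c1 g).mul_left (c2 g)).mul_left (c3 g)).mul_left (c4 g)).mul_left
      (c5 g)).mul_left (c6 g)).mul_left (c7 g)) : Commute _ g).eq
  have h67 : ∀ g : G, δ₆ * δ₇ * g = g * (δ₆ * δ₇) := fun g =>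
    (((c6 g).mul_left (c7 g)) : Commute _ g).eq
  -- Step 1: D₇ * (α₇α₅) = sixholedRHS * σ₆ * α₆
  have e1 : δ₁ * δ₂ * δ₃ * δ₄ * δ₅ * δ₆ * δ₇ * (α₇ * α₅)
      = α₅ * α₇ * α₃ * β * σ₄ * α₄ * α₁ * β * σ₅ * α₂ * β₅ * σ₃ * σ₆ * α₆ := by
    calc δ₁ * δ₂ * δ₃ * δ₄ * δ₅ * δ₆ * δ₇ * (α₇ * α₅)
        = (δ₁ * δ₂ * δ₃ * δ₄ * δ₅) * (δ₆ * δ₇ * (α₇ * α₅)) := by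
          simp only [mul_assoc]
      _ = (δ₁ * δ₂ * δ₃ * δ₄ * δ₅) * ((α₇ * α₅) * (δ₆ * δ₇)) := by rw [h67]
      _ = (δ₁ * δ₂ * δ₃ * δ₄ * δ₅) * (γ₆ * σ₆ * α₆) := by
          rw [show (α₇ * α₅) * (δ₆ * δ₇) = γ₆ * σ₆ * α₆ from by
            rw [← mul_assoc]; exact hlantern]
      _ = (δ₁ * δ₂ * δ₃ * δ₄ * δ₅ * γ₆) * (σ₆ * α₆) := by simp only [mul_assoc]
      _ = (α₅ * α₇ * α₃ * β * σ₄ * α₄ * α₁ * β * σ₅ * α₂ * β₅ * σ₃) * (σ₆ * α₆) := by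
          rw [hsixholed]
      _ = α₅ * α₇ * α₃ * β * σ₄ * α₄ * α₁ * β * σ₅ * α₂ * β₅ * σ₃ * σ₆ * α₆ := by
          simp only [mul_assoc]
  -- Step 2: cancel the conjugation by α₅α₇ using centrality
  have e2 : δ₁ * δ₂ * δ₃ * δ₄ * δ₅ * δ₆ * δ₇
      = α₃ * β * σ₄ * α₄ * α₁ * β * σ₅ * α₂ * β₅ * σ₃ * σ₆ * α₆ := by
    have h := e1
    rw [← hc57, hD (α₅ * α₇)] at h
    have h' : (α₅ * α₇) * (δ₁ * δ₂ * δ₃ * δ₄ * δ₅ * δ₆ * δ₇)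
        = (α₅ * α₇) * (α₃ * β * σ₄ * α₄ * α₁ * β * σ₅ * α₂ * β₅ * σ₃ * σ₆ * α₆) := by
      rw [h]; simp only [mul_assoc]
    exact mul_left_cancel h'
  -- Step 3: α₃βσ₄ = β₃σ₄α₃
  have e3 : β₃ * σ₄ * α₃ = α₃ * β * σ₄ := by
    rw [hβ₃, mul_assoc (α₃ * β * α₃⁻¹) σ₄ α₃, ← hc3σ₄]
    group
  -- Step 4: rewrite D₇ = β₃σ₄ ⬝ K
  have e4 : δ₁ * δ₂ * δ₃ * δ₄ * δ₅ * δ₆ * δ₇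
      = β₃ * σ₄ * α₃ * (α₄ * α₁ * β * σ₅ * α₂ * β₅ * σ₃ * σ₆ * α₆) := by
    rw [e3, e2]; simp only [mul_assoc]
  -- Step 5: cyclically permute using centrality of D₇
  refine mul_right_cancel (b := α₃ * α₄ * α₁ * β * σ₅ * α₂ * β₅ * σ₃ * σ₆ * α₆) ?_
  rw [hD (α₃ * α₄ * α₁ * β * σ₅ * α₂ * β₅ * σ₃ * σ₆ * α₆), e4]
  group
end

section
/- Let G be a group and let α₁, ..., α₈, β, δ₁, ..., δ₈, γ₇, σ₃, σ₄, σ₅, σ₆, σ₇ be elements of G, and set β₁ = α₁βα₁⁻¹, β₄ = α₄βα₄⁻¹ and β₆ = α₆βα₆⁻¹. Assume: (i) δ₁, ..., δ₈ are central in G; (ii) α₆α₈ = α₈α₆; (iii) α₄σ₅ = σ₅α₄; (iv) the braid relations αᵢβαᵢ = βαᵢβ hold for i = 1, ..., 8; (v) the lantern relation α₈α₆δ₇δ₈ = γ₇σ₇α₇ holds; and (vi) the seven-holed torus relation δ₁δ₂δ₃δ₄δ₅δ₆γ₇ = α₆α₈α₄β σ₅ α₅ β₁ σ₃ σ₆ α₂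 β₆ σ₄ holds. Then δ₁δ₂δ₃δ₄δ₅δ₆δ₇δ₈ = α₄α₅ β₁ σ₃ σ₆ α₂ β₆ σ₄ σ₇ α₇ β₄ σ₅. -/
/-- Eight-holed torus relation (group-theoretic content):
`δ₁⋯δ₈ = α₄α₅ β₁ σ₃ σ₆ α₂ β₆ σ₄ σ₇ α₇ β₄ σ₅` in the mapping class group `Γ_{1,8}`,
where `β₁ = α₁βα₁⁻¹`, `β₄ = α₄βα₄⁻¹` and `β₆ = α₆βα₆⁻¹`. -/
theorem eight_holed_torus_relation (G : Type*) [Group G]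
    (α₁ α₂ α₃ α₄ α₅ α₆ α₇ α₈ β δ₁ δ₂ δ₃ δ₄ δ₅ δ₆ δ₇ δ₈ γ₇ σ₃ σ₄ σ₅ σ₆ σ₇ β₁ β₄ β₆ : G)
    (hβ₁ : β₁ = α₁ * β * α₁⁻¹)
    (hβ₄ : β₄ = α₄ * β * α₄⁻¹)
    (hβ₆ : β₆ = α₆ * β * α₆⁻¹)
    (hδ₁ : ∀ g : G, δ₁ * g = g * δ₁)
    (hδ₂ : ∀ g : G, δ₂ * g = g * δ₂)
    (hδ₃ : ∀ g : G, δ₃ * g = g * δ₃)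
    (hδ₄ : ∀ g : G, δ₄ * g = g * δ₄)
    (hδ₅ : ∀ g : G, δ₅ * g = g * δ₅)
    (hδ₆ : ∀ g : G, δ₆ * g = g * δ₆)
    (hδ₇ : ∀ g : G, δ₇ * g = g * δ₇)
    (hδ₈ : ∀ g : G, δ₈ * g = g * δ₈)
    (hc68 : α₆ * α₈ = α₈ * α₆)
    (hc4σ₅ : α₄ * σ₅ = σ₅ * α₄)
    (hbraid₁ : α₁ * β * α₁ = β * α₁ * β)
    (hbraid₂ : α₂ * β * α₂ = β * α₂ * β)
    (hbraid₃ : α₃ * β * α₃ = β * α₃ * β)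
    (hbraid₄ : α₄ * β * α₄ = β * α₄ * β)
    (hbraid₅ : α₅ * β * α₅ = β * α₅ * β)
    (hbraid₆ : α₆ * β * α₆ = β * α₆ * β)
    (hbraid₇ : α₇ * β * α₇ = β * α₇ * β)
    (hbraid₈ : α₈ * β * α₈ = β * α₈ * β)
    (hlantern : α₈ * α₆ * δ₇ * δ₈ = γ₇ * σ₇ * α₇)
    (hsevenholed : δ₁ * δ₂ * δ₃ * δ₄ * δ₅ * δ₆ * γ₇ =
      α₆ * α₈ * α₄ * β * σ₅ * α₅ * β₁ * σ₃ * σ₆ * α₂ * β₆ * σ₄) :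
    δ₁ * δ₂ * δ₃ * δ₄ * δ₅ * δ₆ * δ₇ * δ₈ =
      α₄ * α₅ * β₁ * σ₃ * σ₆ * α₂ * β₆ * σ₄ * σ₇ * α₇ * β₄ * σ₅ := by
  have hσα : σ₇ * α₇ = γ₇⁻¹ * (α₈ * α₆ * δ₇ * δ₈) := by rw [hlantern]; group
  have hγinv : γ₇⁻¹ =
      (α₆ * α₈ * α₄ * β * σ₅ * α₅ * β₁ * σ₃ * σ₆ * α₂ * β₆ * σ₄)⁻¹ *
        (δ₁ * δ₂ * δ₃ * δ₄ * δ₅ * δ₆) := by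
    rw [← hsevenholed]; group
  have hW : α₆ * α₈ * α₄ * β * σ₅ * α₅ * β₁ * σ₃ * σ₆ * α₂ * β₆ * σ₄ =
      (α₈ * α₆ * (β₄ * σ₅)) * (α₄ * α₅ * β₁ * σ₃ * σ₆ * α₂ * β₆ * σ₄) := by
    rw [hβ₄, hc68]
    calc α₈ * α₆ * α₄ * β * σ₅ * α₅ * β₁ * σ₃ * σ₆ * α₂ * β₆ * σ₄
        = α₈ * α₆ * ((α₄ * β * α₄⁻¹) * (α₄ * σ₅)) * (α₅ * β₁ * σ₃ * σ₆ * α₂ * β₆ * σ₄) := by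
          group
      _ = α₈ * α₆ * ((α₄ * β * α₄⁻¹) * (σ₅ * α₄)) * (α₅ * β₁ * σ₃ * σ₆ * α₂ * β₆ * σ₄) := by
          rw [hc4σ₅]
      _ = α₈ * α₆ * (α₄ * β * α₄⁻¹ * σ₅) * (α₄ * α₅ * β₁ * σ₃ * σ₆ * α₂ * β₆ * σ₄) := by
          group
  have hZ78 : (δ₇ * δ₈) * (β₄ * σ₅) = (β₄ * σ₅) * (δ₇ * δ₈) := by
    rw [mul_assoc δ₇ δ₈, hδ₈ (β₄ * σ₅), ← mul_assoc δ₇, hδ₇ (β₄ * σ₅),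
      mul_assoc (β₄ * σ₅) δ₇ δ₈]
  have hDmove : (δ₁ * δ₂ * δ₃ * δ₄ * δ₅ * δ₆) * ((α₈ * α₆) * (β₄ * σ₅)) =
      ((α₈ * α₆) * (β₄ * σ₅)) * (δ₁ * δ₂ * δ₃ * δ₄ * δ₅ * δ₆) := by
    have c : ∀ g : G, Commute g (δ₁ * δ₂ * δ₃ * δ₄ * δ₅ * δ₆) := fun g =>
      (((((show Commute g δ₁ from (hδ₁ g).symm).mul_right
        (show Commute g δ₂ from (hδ₂ g).symm)).mul_right
        (show Commute g δ₃ from (hδ₃ g).symm)).mul_right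
        (show Commute g δ₄ from (hδ₄ g).symm)).mul_right
        (show Commute g δ₅ from (hδ₅ g).symm)).mul_right
        (show Commute g δ₆ from (hδ₆ g).symm)
    exact (c _).symm.eq
  symm
  calc α₄ * α₅ * β₁ * σ₃ * σ₆ * α₂ * β₆ * σ₄ * σ₇ * α₇ * β₄ * σ₅
      = (α₄ * α₅ * β₁ * σ₃ * σ₆ * α₂ * β₆ * σ₄) * (σ₇ * α₇) * (β₄ * σ₅) := by group
    _ = (α₄ * α₅ * β₁ * σ₃ * σ₆ * α₂ * β₆ * σ₄) *
          (γ₇⁻¹ * (α₈ * α₆ * δ₇ * δ₈)) * (β₄ * σ₅) := by rw [hσα]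
    _ = (α₄ * α₅ * β₁ * σ₃ * σ₆ * α₂ * β₆ * σ₄) *
          (((α₆ * α₈ * α₄ * β * σ₅ * α₅ * β₁ * σ₃ * σ₆ * α₂ * β₆ * σ₄)⁻¹ *
            (δ₁ * δ₂ * δ₃ * δ₄ * δ₅ * δ₆)) * (α₈ * α₆ * δ₇ * δ₈)) * (β₄ * σ₅) := by
        rw [hγinv]
    _ = (α₄ * α₅ * β₁ * σ₃ * σ₆ * α₂ * β₆ * σ₄) *
          ((((α₈ * α₆ * (β₄ * σ₅)) * (α₄ * α₅ * β₁ * σ₃ * σ₆ * α₂ * β₆ * σ₄))⁻¹ *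
            (δ₁ * δ₂ * δ₃ * δ₄ * δ₅ * δ₆)) * (α₈ * α₆ * δ₇ * δ₈)) * (β₄ * σ₅) := by
        rw [hW]
    _ = ((α₈ * α₆ * (β₄ * σ₅))⁻¹ * (δ₁ * δ₂ * δ₃ * δ₄ * δ₅ * δ₆)) *
          ((α₈ * α₆) * ((δ₇ * δ₈) * (β₄ * σ₅))) := by group
    _ = ((α₈ * α₆ * (β₄ * σ₅))⁻¹ * (δ₁ * δ₂ * δ₃ * δ₄ * δ₅ * δ₆)) *
          ((α₈ * α₆) * ((β₄ * σ₅) * (δ₇ * δ₈))) := by rw [hZ78]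
    _ = (α₈ * α₆ * (β₄ * σ₅))⁻¹ *
          ((δ₁ * δ₂ * δ₃ * δ₄ * δ₅ * δ₆) * ((α₈ * α₆) * (β₄ * σ₅))) * (δ₇ * δ₈) := by
        group
    _ = (α₈ * α₆ * (β₄ * σ₅))⁻¹ *
          (((α₈ * α₆) * (β₄ * σ₅)) * (δ₁ * δ₂ * δ₃ * δ₄ * δ₅ * δ₆)) * (δ₇ * δ₈) := by
        rw [hDmove]
    _ = δ₁ * δ₂ * δ₃ * δ₄ * δ₅ * δ₆ * δ₇ * δ₈ := by group
end

section
/- Let G be a group and let α₁, ..., α₉, β, δ₁, ..., δ₉, γ₈, σ₃, σ₄, σ₅, σ₆, σ₇, σ₈ be elements of G, and set β₁ = α₁βα₁⁻¹, β₄ = α₄βα₄⁻¹ and β₇ = α₇βα₇⁻¹. Assume: (i) δ₁, ..., δ₉ are central in G; (ii) α₇α₉ = α₉α₇; (iii) the braid relations αᵢβαᵢ = βαᵢβ hold for i = 1, ..., 9; (iv) the lantern relation α₉α₇δ₈δ₉ = γ₈σ₈α₈ holds; and (v) the eight-holed torus relation δ₁δ₂δ₃δ₄δ₅δ₆δ₇γ₈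 = α₇α₉ β₄ σ₃ σ₆ α₅ β₁ σ₄ σ₇ α₂ β₇ σ₅ holds. Then δ₁δ₂δ₃δ₄δ₅δ₆δ₇δ₈δ₉ = β₄ σ₃ σ₆ α₅ β₁ σ₄ σ₇ α₂ β₇ σ₅ σ₈ α₈. -/
/-- Nine-holed torus relation (group-theoretic content):
`δ₁⋯δ₉ = β₄ σ₃ σ₆ α₅ β₁ σ₄ σ₇ α₂ β₇ σ₅ σ₈ α₈` in the mapping class group `Γ_{1,9}`,
where `β₁ = α₁βα₁⁻¹`, `β₄ = α₄βα₄⁻¹` and `β₇ = α₇βα₇⁻¹`. -/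
theorem nine_holed_torus_relation (G : Type*) [Group G]
    (α₁ α₂ α₃ α₄ α₅ α₆ α₇ α₈ α₉ β δ₁ δ₂ δ₃ δ₄ δ₅ δ₆ δ₇ δ₈ δ₉ γ₈ σ₃ σ₄ σ₅ σ₆ σ₇ σ₈ β₁ β₄ β₇ : G)
    (hβ₁ : β₁ = α₁ * β * α₁⁻¹)
    (hβ₄ : β₄ = α₄ * β * α₄⁻¹)
    (hβ₇ : β₇ = α₇ * β * α₇⁻¹)
    (hδ₁ : ∀ g : G, δ₁ * g = g * δ₁)
    (hδ₂ : ∀ g : G, δ₂ * g = g * δ₂)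
    (hδ₃ : ∀ g : G, δ₃ * g = g * δ₃)
    (hδ₄ : ∀ g : G, δ₄ * g = g * δ₄)
    (hδ₅ : ∀ g : G, δ₅ * g = g * δ₅)
    (hδ₆ : ∀ g : G, δ₆ * g = g * δ₆)
    (hδ₇ : ∀ g : G, δ₇ * g = g * δ₇)
    (hδ₈ : ∀ g : G, δ₈ * g = g * δ₈)
    (hδ₉ : ∀ g : G, δ₉ * g = g * δ₉)
    (hc79 : α₇ * α₉ = α₉ * α₇)
    (hbraid₁ : α₁ * β * α₁ = β * α₁ * β)
    (hbraid₂ : α₂ * β * α₂ = β * α₂ * β)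
    (hbraid₃ : α₃ * β * α₃ = β * α₃ * β)
    (hbraid₄ : α₄ * β * α₄ = β * α₄ * β)
    (hbraid₅ : α₅ * β * α₅ = β * α₅ * β)
    (hbraid₆ : α₆ * β * α₆ = β * α₆ * β)
    (hbraid₇ : α₇ * β * α₇ = β * α₇ * β)
    (hbraid₈ : α₈ * β * α₈ = β * α₈ * β)
    (hbraid₉ : α₉ * β * α₉ = β * α₉ * β)
    (hlantern : α₉ * α₇ * δ₈ * δ₉ = γ₈ * σ₈ * α₈)
    (heightholed : δ₁ * δ₂ * δ₃ * δ₄ * δ₅ * δ₆ * δ₇ * γ₈ =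
      α₇ * α₉ * β₄ * σ₃ * σ₆ * α₅ * β₁ * σ₄ * σ₇ * α₂ * β₇ * σ₅) :
    δ₁ * δ₂ * δ₃ * δ₄ * δ₅ * δ₆ * δ₇ * δ₈ * δ₉ =
      β₄ * σ₃ * σ₆ * α₅ * β₁ * σ₄ * σ₇ * α₂ * β₇ * σ₅ * σ₈ * α₈ := by
  -- the product of the seven central elements is central
  have hC : ∀ g : G, (δ₁ * δ₂ * δ₃ * δ₄ * δ₅ * δ₆ * δ₇) * g
      = g * (δ₁ * δ₂ * δ₃ * δ₄ * δ₅ * δ₆ * δ₇) := fun g =>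
    ((((((Commute.mul_left (hδ₁ g) (hδ₂ g)).mul_left (hδ₃ g)).mul_left (hδ₄ g)).mul_left
      (hδ₅ g)).mul_left (hδ₆ g)).mul_left (hδ₇ g) : Commute _ g)
  -- isolate δ₈δ₉ from the lantern relation
  have h89 : δ₈ * δ₉ = α₇⁻¹ * α₉⁻¹ * (γ₈ * σ₈ * α₈) := by
    rw [← hlantern]; group
  calc δ₁ * δ₂ * δ₃ * δ₄ * δ₅ * δ₆ * δ₇ * δ₈ * δ₉
      = (δ₁ * δ₂ * δ₃ * δ₄ * δ₅ * δ₆ * δ₇) * (δ₈ * δ₉) := by group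
    _ = (δ₁ * δ₂ * δ₃ * δ₄ * δ₅ * δ₆ * δ₇) * (α₇⁻¹ * α₉⁻¹ * (γ₈ * σ₈ * α₈)) := by rw [h89]
    _ = α₇⁻¹ * α₉⁻¹ * ((δ₁ * δ₂ * δ₃ * δ₄ * δ₅ * δ₆ * δ₇) * γ₈) * σ₈ * α₈ := by
        rw [← mul_assoc, hC (α₇⁻¹ * α₉⁻¹)]; group
    _ = α₇⁻¹ * α₉⁻¹ * (α₇ * α₉ * β₄ * σ₃ * σ₆ * α₅ * β₁ * σ₄ * σ₇ * α₂ * β₇ * σ₅) * σ₈ * α₈ := by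
        rw [heightholed]
    _ = α₇⁻¹ * α₉⁻¹ * (α₉ * α₇) * (β₄ * σ₃ * σ₆ * α₅ * β₁ * σ₄ * σ₇ * α₂ * β₇ * σ₅ * σ₈ * α₈) := by
        rw [← hc79]; group
    _ = β₄ * σ₃ * σ₆ * α₅ * β₁ * σ₄ * σ₇ * α₂ * β₇ * σ₅ * σ₈ * α₈ := by group
end
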